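/- arXiv:2502.05627 — 3 statements merged into one kernel-verified Lean document; each statement's English description precedes it below -/
import Mathlib

section
/- Let g be a C³ concave function on an open interval containing (−1,1), and suppose there exists a positive finite Borel measure μ on [−1,1] such that g(t) = g(0) + g'(0)t + (1/2)g''(0)∫_{−1}^{1} t²/(1−st) dμ(s) for all t ∈ (−1,1). Then g'''(0) ≥ 3·g''(0), i.e., g satisfies the compatibility inequality D³g(0) ≤ −3·D²g(0) when g''(0) ≤ 0. -/
/-!
Compare the representation with the cubic Taylor expansion of `g` at `0`. Expanding
`1/(1 - st)` as a geometric series (with `|st| ≤ 1/2` near `t = 0`) gives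
`g t - g 0 - g'(0) t = (g''(0)/2) (μ(ℝ) t² + (∫ s dμ) t³) + O(t⁴)`, so matching coefficients yields
`g''(0) μ(ℝ) = g''(0)` and `g'''(0) = 3 g''(0) ∫ s dμ`. Since `g''(0) ≤ 0` by concavity and
`∫ s dμ ≤ μ(ℝ)`, this gives `g'''(0) ≥ 3 g''(0) μ(ℝ) = 3 g''(0)`.
-/

open MeasureTheory Filter Topology Asymptotics Set

theorem ConcaveOn.iteratedDeriv_two_nonpos {f : ℝ → ℝ} {s : Set ℝ} {x : ℝ}
    (hf : ConcaveOn ℝ s f) (hs : IsOpen s) (hd : DifferentiableOn ℝ f s) (hx : x ∈ s) :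
    iteratedDeriv 2 f x ≤ 0 := by
  have hanti := hf.antitoneOn_deriv fun y hy => hd.differentiableAt (hs.mem_nhds hy)
  rw [iteratedDeriv_succ, iteratedDeriv_one, ← derivWithin_of_isOpen hs hx]
  exact hanti.derivWithin_nonpos

theorem ContDiffOn.taylor_isLittleO_nhds {E : Type*} [NormedAddCommGroup E] [NormedSpace ℝ E]
    {f : ℝ → E} {s : Set ℝ} {x₀ : ℝ} {n : ℕ} (hs : IsOpen s) (hs' : Convex ℝ s) (hx₀ : x₀ ∈ s)
    (hf : ContDiffOn ℝ n f s) :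
    (fun x => f x - ∑ k ∈ Finset.range (n + 1), ((k.factorial : ℝ)⁻¹ * (x - x₀) ^ k) •
      iteratedDeriv k f x₀) =o[𝓝 x₀] fun x => (x - x₀) ^ n := by
  have h := taylor_isLittleO hs' hx₀ hf
  rw [nhdsWithin_eq_nhds.2 (hs.mem_nhds hx₀)] at h
  refine h.congr_left fun x => ?_
  simp only [taylor_within_apply, iteratedDerivWithin_of_isOpen hs hx₀]

theorem eq_zero_of_mul_pow_isLittleO {a : ℝ} {n : ℕ}
    (h : (fun t : ℝ => a * t ^ n) =o[𝓝 0] fun t => t ^ n) : a = 0 := by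
  by_contra ha
  refine isLittleO_irrefl ?_ ((isLittleO_const_mul_left_iff ha).1 h)
  have hne : ∀ᶠ t in 𝓝[≠] (0 : ℝ), t ^ n ≠ 0 :=
    eventually_nhdsWithin_of_forall fun t ht => pow_ne_zero n ht
  exact hne.frequently.filter_mono nhdsWithin_le_nhds

theorem eq_zero_of_quadratic_add_cubic_isLittleO {a b : ℝ}
    (h : (fun t : ℝ => a * t ^ 2 + b * t ^ 3) =o[𝓝 0] fun t => t ^ 3) : a = 0 ∧ b = 0 := by
  have hcubic : (fun t : ℝ => t ^ 3) =o[𝓝 0] fun t => t ^ 2 := isLittleO_pow_pow (by norm_num)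
  have ha : a = 0 := eq_zero_of_mul_pow_isLittleO <|
    (h.trans hcubic).sub ((isBigO_const_mul_self b _ _).trans_isLittleO hcubic)
      |>.congr_left fun t => by ring
  subst ha
  exact ⟨rfl, eq_zero_of_mul_pow_isLittleO (h.congr_left fun t => by ring)⟩

lemma sq_div_one_sub_mul_eq {s t : ℝ} (h : 1 - s * t ≠ 0) :
    t ^ 2 / (1 - s * t) = t ^ 2 + s * t ^ 3 + s ^ 2 * t ^ 4 / (1 - s * t) := by
  rw [div_eq_iff h, add_mul, div_mul_cancel₀ _ h]
  ring

lemma half_le_one_sub_mul {s t : ℝ} (hs : |s| ≤ 1) (ht : |t| ≤ 1 / 2) : 1 / 2 ≤ 1 - s * t := by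
  have : s * t ≤ 1 / 2 :=
    calc s * t ≤ |s| * |t| := by rw [← abs_mul]; exact le_abs_self _
      _ ≤ 1 * (1 / 2) := by gcongr
      _ = 1 / 2 := one_mul _
  linarith

section

variable {μ : Measure ℝ} [IsFiniteMeasure μ]

lemma integrable_id_of_ae_abs_le_one (hμ : ∀ᵐ s ∂μ, |s| ≤ 1) : Integrable (fun s : ℝ => s) μ :=
  Integrable.of_bound measurable_id.aestronglyMeasurable 1 hμ

lemma integral_id_le_measureReal_univ (hμ : ∀ᵐ s ∂μ, |s| ≤ 1) : ∫ s, s ∂μ ≤ μ.real univ := by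
  simpa using integral_mono_ae (integrable_id_of_ae_abs_le_one hμ) (integrable_const 1)
    (hμ.mono fun s hs => (abs_le.1 hs).2)

theorem integral_sq_div_one_sub_mul_sub_isBigO (hμ : ∀ᵐ s ∂μ, |s| ≤ 1) :
    (fun t => (∫ s, t ^ 2 / (1 - s * t) ∂μ) - (μ.real univ * t ^ 2 + (∫ s, s ∂μ) * t ^ 3))
      =O[𝓝 0] fun t => t ^ 4 := by
  have hsmall : ∀ᶠ t : ℝ in 𝓝 0, |t| ≤ 1 / 2 := by
    have : Tendsto (fun t : ℝ => |t|) (𝓝 0) (𝓝 0) := by simpa using continuous_abs.tendsto (0 : ℝ)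
    exact this.eventually (ge_mem_nhds (by norm_num))
  refine IsBigO.of_bound (2 * μ.real univ) ?_
  filter_upwards [hsmall] with t ht
  have hden : ∀ᵐ s ∂μ, 1 / 2 ≤ 1 - s * t := hμ.mono fun s hs => half_le_one_sub_mul hs ht
  have hrem_bound : ∀ᵐ s ∂μ, ‖s ^ 2 * t ^ 4 / (1 - s * t)‖ ≤ 2 * t ^ 4 := by
    filter_upwards [hμ, hden] with s hs hst
    have hs2 : s ^ 2 ≤ 1 := by nlinarith [abs_le.1 hs]
    rw [Real.norm_eq_abs, abs_of_nonneg (div_nonneg (by positivity) (by linarith)),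
      div_le_iff₀ (by linarith)]
    have ht4 : (0 : ℝ) ≤ t ^ 4 := by positivity
    nlinarith [mul_le_mul_of_nonneg_right hs2 ht4, mul_le_mul_of_nonneg_left hst ht4]
  have hrem_int : Integrable (fun s => s ^ 2 * t ^ 4 / (1 - s * t)) μ :=
    Integrable.of_bound (by fun_prop : Measurable _).aestronglyMeasurable _ hrem_bound
  have hid_int := integrable_id_of_ae_abs_le_one hμ
  have hsplit : ∫ s, t ^ 2 / (1 - s * t) ∂μ
      = ∫ s, (t ^ 2 + s * t ^ 3 + s ^ 2 * t ^ 4 / (1 - s * t)) ∂μ :=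
    integral_congr_ae (hden.mono fun s hs => sq_div_one_sub_mul_eq (by linarith))
  have hpoly_int : Integrable (fun s : ℝ => t ^ 2 + s * t ^ 3) μ :=
    (integrable_const _).add (hid_int.mul_const _)
  rw [hsplit, integral_add hpoly_int hrem_int,
    integral_add (integrable_const _) (hid_int.mul_const _), integral_const, integral_mul_const,
    smul_eq_mul, add_sub_cancel_left, Real.norm_of_nonneg (by positivity : (0 : ℝ) ≤ t ^ 4)]
  calc _ ≤ 2 * t ^ 4 * μ.real univ := norm_integral_le_of_norm_le_const hrem_bound
    _ = _ := by ring

end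

/-- If `g` is `C³` and concave on `(−1,1)` and admits the integral representation
`g(t) = g(0) + g'(0)t + (1/2)g''(0)∫ t²/(1−st) dμ(s)` for a positive finite Borel
measure `μ` on `[−1,1]`, then `g'''(0) ≥ 3 g''(0)`. -/
theorem compatibility_from_integral_rep (g : ℝ → ℝ) (μ : Measure ℝ)
    [IsFiniteMeasure μ] (hsupp : μ (Set.Icc (-1 : ℝ) 1)ᶜ = 0)
    (hg : ContDiffOn ℝ 3 g (Set.Ioo (-1 : ℝ) 1))
    (hconc : ConcaveOn ℝ (Set.Ioo (-1 : ℝ) 1) g)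
    (hrep : ∀ t ∈ Set.Ioo (-1 : ℝ) 1,
      g t = g 0 + deriv g 0 * t +
        (1 / 2) * iteratedDeriv 2 g 0 * ∫ s, t ^ 2 / (1 - s * t) ∂μ) :
    3 * iteratedDeriv 2 g 0 ≤ iteratedDeriv 3 g 0 := by
  set D2 := iteratedDeriv 2 g 0
  set D3 := iteratedDeriv 3 g 0
  have hI : Ioo (-1 : ℝ) 1 ∈ 𝓝 0 := Ioo_mem_nhds (by norm_num) (by norm_num)
  have hμ : ∀ᵐ s ∂μ, |s| ≤ 1 := (show ∀ᵐ s ∂μ, s ∈ Icc (-1 : ℝ) 1 from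
    mem_ae_iff.2 hsupp).mono fun s hs => abs_le.2 hs
  have hD2 : D2 ≤ 0 := hconc.iteratedDeriv_two_nonpos isOpen_Ioo
    (hg.differentiableOn (by norm_num)) (mem_of_mem_nhds hI)
  have htaylor : (fun t => g t - (g 0 + deriv g 0 * t + D2 / 2 * t ^ 2 + D3 / 6 * t ^ 3))
      =o[𝓝 0] fun t => t ^ 3 := by
    have h := hg.taylor_isLittleO_nhds isOpen_Ioo (convex_Ioo _ _) (mem_of_mem_nhds hI)
    simp only [sub_zero, Finset.sum_range_succ, Finset.sum_range_zero, smul_eq_mul] at h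
    refine h.congr_left fun t => ?_
    simp only [Nat.factorial, iteratedDeriv_zero, iteratedDeriv_one, D2, D3]
    push_cast
    ring
  have hrep_exp : (fun t => g t - (g 0 + deriv g 0 * t +
      D2 / 2 * (μ.real univ * t ^ 2 + (∫ s, s ∂μ) * t ^ 3))) =o[𝓝 0] fun t => t ^ 3 := by
    refine (((integral_sq_div_one_sub_mul_sub_isBigO hμ).const_mul_left (D2 / 2)).trans_isLittleO
      (isLittleO_pow_pow (by norm_num))).congr' (eventually_of_mem hI fun t ht => ?_) .rfl
    dsimp only
    rw [hrep t ht]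
    ring
  obtain ⟨hA, hB⟩ := eq_zero_of_quadratic_add_cubic_isLittleO
    (a := D2 / 2 - D2 / 2 * μ.real univ) (b := D3 / 6 - D2 / 2 * ∫ s, s ∂μ)
    ((hrep_exp.sub htaylor).congr_left fun t => by ring)
  nlinarith [mul_le_mul_of_nonpos_left (integral_id_le_measureReal_univ hμ) hD2]
end

section
/- Let f be operator monotone on (γ,∞) for some γ > 0, so that f admits the Loewner integral representation f(x) = α + βx + ∫_{−∞}^{γ} (1/(s−x) − s/(s²+1)) dμ(s) with β ≥ 0 and μ a positive Borel measure on (−∞,γ]. Then the transpose f̂(x) = x·f(1/x) is operator concave on (0, 1/γ). -/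
open Matrix MeasureTheory ComplexOrder

/-- `f` is matrix convex of order `m` on `I ⊆ ℝ`: for Hermitian matrices with spectra
in `I`, `λ f(X) + (1−λ) f(Y) − f(λX + (1−λ)Y) ⪰ 0`, where `f` is applied spectrally
(via the continuous functional calculus). -/
def MatrixConvexOnOrder (m : ℕ) (I : Set ℝ) (f : ℝ → ℝ) : Prop :=
  ∀ X Y : Matrix (Fin m) (Fin m) ℂ, X.IsHermitian → Y.IsHermitian →
    spectrum ℝ X ⊆ I → spectrum ℝ Y ⊆ I →
    ∀ lam : ℝ, lam ∈ Set.Icc (0 : ℝ) 1 →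
      (lam • cfc f X + (1 - lam) • cfc f Y - cfc f (lam • X + (1 - lam) • Y)).PosSemidef

/-- `f` is operator convex on `I`: matrix convex of every order. -/
def OperatorConvexOn (I : Set ℝ) (f : ℝ → ℝ) : Prop :=
  ∀ m : ℕ, MatrixConvexOnOrder m I f

/-- `f` is operator concave on `I`: `−f` is operator convex. -/
def OperatorConcaveOn (I : Set ℝ) (f : ℝ → ℝ) : Prop :=
  OperatorConvexOn I (fun x => -f x)

/-!
On `(0, 1/γ)` the representation gives `x f(1/x) = a x + b + ∫ x φₛ(1/x) dμ(s)` with Loewner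
kernel `φₛ(y) = 1/(s - y) - s/(s² + 1)`, and `-x φₛ(1/x) = x²/(1 - s x) + s x/(s² + 1)`.
For `s = 0` the first term is `x²`, whose operator convexity is `λX² + (1-λ)Y² - (λX + (1-λ)Y)² =
λ(1-λ)(X - Y)²`; for `s ≠ 0` it is `s⁻²(1 - s x)⁻¹` plus an affine function, and the inverse is
operator convex on `(0, ∞)`. Operator convexity survives integration in `s` because
`⟨v, g(X) v⟩ = ∑ᵢ g(λᵢ) |⟨uᵢ, v⟩|²` is a positive combination of point evaluations of `g`.
-/

open Set

namespace Matrix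

variable {n : Type*} {A B : Matrix n n ℂ}

lemma IsHermitian.convexComb {X Y : Matrix n n ℂ} (hX : X.IsHermitian) (hY : Y.IsHermitian)
    (lam : ℝ) : (lam • X + (1 - lam) • Y).IsHermitian :=
  ((IsSelfAdjoint.all lam).smul hX.isSelfAdjoint).add
    ((IsSelfAdjoint.all (1 - lam)).smul hY.isSelfAdjoint)

lemma PosDef.convexComb (hA : A.PosDef) (hB : B.PosDef) {lam : ℝ} (hlam : lam ∈ Icc (0 : ℝ) 1) :
    (lam • A + (1 - lam) • B).PosDef := by
  rcases hlam.1.eq_or_lt with rfl | hpos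
  · simpa using hB
  · exact (hA.smul hpos).add_posSemidef (hB.posSemidef.smul (sub_nonneg.2 hlam.2))

variable [Fintype n] [DecidableEq n]

lemma continuousOn_real_spectrum (X : Matrix n n ℂ) (f : ℝ → ℝ) : ContinuousOn f (spectrum ℝ X) :=
  finite_real_spectrum.continuousOn f

namespace IsHermitian

variable {X : Matrix n n ℂ} (hX : X.IsHermitian)

noncomputable def eigenweight (v : n → ℂ) (i : n) : ℝ :=
  Complex.normSq ((star (hX.eigenvectorUnitary : Matrix n n ℂ) *ᵥ v) i)

lemma dotProduct_cfc_mulVec (f : ℝ → ℝ) (v : n → ℂ) :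
    star v ⬝ᵥ (cfc f X *ᵥ v) = ((∑ i, f (hX.eigenvalues i) * hX.eigenweight v i : ℝ) : ℂ) := by
  have hU : star v ᵥ* (hX.eigenvectorUnitary : Matrix n n ℂ) =
      star (star (hX.eigenvectorUnitary : Matrix n n ℂ) *ᵥ v) := by
    rw [star_mulVec, star_eq_conjTranspose, conjTranspose_conjTranspose]
  rw [hX.cfc_eq, IsHermitian.cfc, Unitary.conjStarAlgAut_apply, ← mulVec_mulVec, ← mulVec_mulVec,
    dotProduct_mulVec, hU]
  simp only [dotProduct, mulVec_diagonal, Pi.star_apply, eigenweight, Complex.ofReal_sum,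
    Complex.ofReal_mul, Complex.normSq_eq_conj_mul_self, Function.comp_apply, RCLike.star_def]
  exact Finset.sum_congr rfl fun i _ => mul_left_comm _ _ _

lemma sum_eigenweight (v : n → ℂ) : ((∑ i, hX.eigenweight v i : ℝ) : ℂ) = star v ⬝ᵥ v := by
  simpa [cfc_const_one ℝ X] using (hX.dotProduct_cfc_mulVec (fun _ => 1) v).symm

lemma eigenweight_nonneg (v : n → ℂ) (i : n) : 0 ≤ hX.eigenweight v i := Complex.normSq_nonneg _

lemma exists_dotProduct_mulVec_eq (hX : X.IsHermitian) {I : Set ℝ} (hI : Convex ℝ I)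
    (hXI : spectrum ℝ X ⊆ I) {u : n → ℂ} (hu : star u ⬝ᵥ u = 1) :
    ∃ r ∈ I, star u ⬝ᵥ (X *ᵥ u) = r := by
  refine ⟨∑ i, hX.eigenweight u i • hX.eigenvalues i,
    hI.sum_mem (fun i _ => hX.eigenweight_nonneg u i) ?_
      fun i _ => hXI (hX.eigenvalues_mem_spectrum_real i), ?_⟩
  · exact_mod_cast (hX.sum_eigenweight u).trans hu
  · simpa [cfc_id' ℝ X, smul_eq_mul, mul_comm] using hX.dotProduct_cfc_mulVec (fun x => x) u

lemma spectrum_convexComb_subset {X Y : Matrix n n ℂ} (hX : X.IsHermitian) (hY : Y.IsHermitian)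
    {I : Set ℝ} (hI : Convex ℝ I) (hXI : spectrum ℝ X ⊆ I) (hYI : spectrum ℝ Y ⊆ I)
    {lam : ℝ} (hlam : lam ∈ Icc (0 : ℝ) 1) : spectrum ℝ (lam • X + (1 - lam) • Y) ⊆ I := by
  have hZ := convexComb hX hY lam
  rw [hZ.spectrum_real_eq_range_eigenvalues]
  rintro _ ⟨j, rfl⟩
  set u := ⇑(hZ.eigenvectorBasis j)
  have hu : star u ⬝ᵥ u = 1 := by
    rw [← hZ.sum_eigenweight u]
    simp [eigenweight, u, star_eigenvectorUnitary_mulVec, Pi.single_apply]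
  obtain ⟨r, hr, hXu⟩ := hX.exists_dotProduct_mulVec_eq hI hXI hu
  obtain ⟨t, ht, hYu⟩ := hY.exists_dotProduct_mulVec_eq hI hYI hu
  have hj : (hZ.eigenvalues j : ℂ) = ((lam * r + (1 - lam) * t : ℝ) : ℂ) := by
    calc (hZ.eigenvalues j : ℂ) = star u ⬝ᵥ ((lam • X + (1 - lam) • Y) *ᵥ u) := by
          rw [hZ.mulVec_eigenvectorBasis, dotProduct_smul, hu, Complex.real_smul, mul_one]
      _ = _ := by
          rw [add_mulVec, smul_mulVec, smul_mulVec, dotProduct_add, dotProduct_smul,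
            dotProduct_smul, hXu, hYu, Complex.real_smul, Complex.real_smul]
          push_cast; ring
  rw [Complex.ofReal_inj.mp hj]
  exact hI hr ht hlam.1 (sub_nonneg.2 hlam.2) (by ring)

lemma cfc_affine (hX : X.IsHermitian) (c d : ℝ) :
    cfc (fun x => c * x + d) X = c • X + algebraMap ℝ _ d := by
  rw [cfc_add .., cfc_const_mul .., cfc_id' ℝ X hX.isSelfAdjoint, cfc_const d X hX.isSelfAdjoint]

end IsHermitian

open scoped MatrixOrder in
/-- By Schur complements: `[[M, 1], [1, M⁻¹]]` is positive semidefinite for positive definite `M`,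
hence so is a convex combination of two such block matrices. -/
theorem PosDef.inv_convexComb_le (hA : A.PosDef) (hB : B.PosDef) {lam : ℝ}
    (hlam : lam ∈ Icc (0 : ℝ) 1) :
    (lam • A + (1 - lam) • B)⁻¹ ≤ lam • A⁻¹ + (1 - lam) • B⁻¹ := by
  have hblock : ∀ {M : Matrix n n ℂ}, M.PosDef → (fromBlocks M 1 1 M⁻¹).PosSemidef := by
    intro M hM
    have := hM.isUnit.invertible
    have h := (hM.fromBlocks₁₁ (1 : Matrix n n ℂ) M⁻¹).2 (by simpa using PosSemidef.zero)
    rwa [conjTranspose_one] at h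
  have hsum := ((hblock hA).smul hlam.1).add ((hblock hB).smul (sub_nonneg.2 hlam.2))
  rw [fromBlocks_smul, fromBlocks_smul, fromBlocks_add, ← add_smul, add_sub_cancel,
    one_smul] at hsum
  have hC := hA.convexComb hB hlam
  have := hC.isUnit.invertible
  have h := (hC.fromBlocks₁₁ (1 : Matrix n n ℂ) (lam • A⁻¹ + (1 - lam) • B⁻¹)).1
    (by rwa [conjTranspose_one])
  exact le_iff.2 (by simpa using h)

end Matrix

namespace OperatorConvexOn

variable {I J : Set ℝ} {f g : ℝ → ℝ}

lemma mono (hf : OperatorConvexOn J f) (hIJ : I ⊆ J) : OperatorConvexOn I f :=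
  fun m X Y hX hY hXI hYI => hf m X Y hX hY (hXI.trans hIJ) (hYI.trans hIJ)

lemma congr (hI : Convex ℝ I) (hf : OperatorConvexOn I f) (hfg : EqOn f g I) :
    OperatorConvexOn I g := by
  intro m X Y hX hY hXI hYI lam hlam
  have hZI := IsHermitian.spectrum_convexComb_subset hX hY hI hXI hYI hlam
  rw [← cfc_congr (hfg.mono hXI), ← cfc_congr (hfg.mono hYI), ← cfc_congr (hfg.mono hZI)]
  exact hf m X Y hX hY hXI hYI lam hlam

lemma add (hf : OperatorConvexOn I f) (hg : OperatorConvexOn I g) :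
    OperatorConvexOn I (fun x => f x + g x) := by
  intro m X Y hX hY hXI hYI lam hlam
  simp only [cfc_add _ f g (continuousOn_real_spectrum _ f)
    (continuousOn_real_spectrum _ g)]
  convert (hf m X Y hX hY hXI hYI lam hlam).add (hg m X Y hX hY hXI hYI lam hlam) using 1
  module

lemma const_mul (hf : OperatorConvexOn I f) {c : ℝ} (hc : 0 ≤ c) :
    OperatorConvexOn I (fun x => c * f x) := by
  intro m X Y hX hY hXI hYI lam hlam
  simp only [cfc_const_mul c f _ (continuousOn_real_spectrum _ f)]
  convert (hf m X Y hX hY hXI hYI lam hlam).smul hc using 1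
  module

lemma comp_affine (hg : OperatorConvexOn J g) {c d : ℝ}
    (hIJ : MapsTo (fun x => c * x + d) I J) : OperatorConvexOn I (fun x => g (c * x + d)) := by
  intro m X Y hX hY hXI hYI lam hlam
  have hcomp : ∀ {W : Matrix (Fin m) (Fin m) ℂ}, W.IsHermitian →
      cfc (fun x => g (c * x + d)) W = cfc g (cfc (fun x => c * x + d) W) := fun hW =>
    cfc_comp g (fun x => c * x + d) _ hW.isSelfAdjoint
      (finite_real_spectrum.image _ |>.continuousOn g) (by fun_prop)
  have hspec : ∀ {W : Matrix (Fin m) (Fin m) ℂ}, W.IsHermitian → spectrum ℝ W ⊆ I →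
      spectrum ℝ (cfc (fun x => c * x + d) W) ⊆ J := fun hW hWI => by
    rw [cfc_map_spectrum _ _ hW.isSelfAdjoint]
    exact (hIJ.mono_left hWI).image_subset
  have hZ := IsHermitian.convexComb hX hY lam
  have hZaff : cfc (fun x => c * x + d) (lam • X + (1 - lam) • Y) =
      lam • cfc (fun x => c * x + d) X + (1 - lam) • cfc (fun x => c * x + d) Y := by
    rw [hX.cfc_affine, hY.cfc_affine, hZ.cfc_affine]
    module
  rw [hcomp hX, hcomp hY, hcomp hZ, hZaff]
  exact hg m _ _ (cfc_predicate _ X) (cfc_predicate _ Y) (hspec hX hXI) (hspec hY hYI) lam hlam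

lemma integral {α : Type*} [MeasurableSpace α] {μ : Measure α}
    (hI : Convex ℝ I) {k : α → ℝ → ℝ} (hk : ∀ᵐ s ∂μ, OperatorConvexOn I (k s))
    (hint : ∀ x ∈ I, Integrable (fun s => k s x) μ) :
    OperatorConvexOn I (fun x => ∫ s, k s x ∂μ) := by
  intro m X Y hX hY hXI hYI lam hlam
  set Z := lam • X + (1 - lam) • Y
  have hZ : Z.IsHermitian := hX.convexComb hY lam
  have hZI := IsHermitian.spectrum_convexComb_subset hX hY hI hXI hYI hlam
  let form : ∀ {W : Matrix (Fin m) (Fin m) ℂ}, W.IsHermitian → (ℝ → ℝ) → (Fin m → ℂ) → ℝ :=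
    fun hW g v => ∑ i, g (hW.eigenvalues i) * hW.eigenweight v i
  let gap (g : ℝ → ℝ) (v : Fin m → ℂ) : ℝ :=
    lam * form hX g v + (1 - lam) * form hY g v - form hZ g v
  have hgap : ∀ g v, star v ⬝ᵥ ((lam • cfc g X + (1 - lam) • cfc g Y - cfc g Z) *ᵥ v) =
      gap g v := fun g v => by
    simp only [sub_mulVec, add_mulVec, smul_mulVec, dotProduct_sub, dotProduct_add,
      dotProduct_smul, hX.dotProduct_cfc_mulVec, hY.dotProduct_cfc_mulVec,
      hZ.dotProduct_cfc_mulVec, Complex.real_smul, gap, form]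
    push_cast
    ring
  have hform : ∀ {W : Matrix (Fin m) (Fin m) ℂ} (hW : W.IsHermitian), spectrum ℝ W ⊆ I →
      ∀ v, Integrable (fun s => form hW (k s) v) μ ∧
        form hW (fun x => ∫ s, k s x ∂μ) v = ∫ s, form hW (k s) v ∂μ := fun hW hWI v => by
    have hi : ∀ i, Integrable (fun s => k s (hW.eigenvalues i) * hW.eigenweight v i) μ :=
      fun i => (hint _ (hWI (hW.eigenvalues_mem_spectrum_real i))).mul_const _
    refine ⟨integrable_finsetSum _ fun i _ => hi i, ?_⟩
    rw [integral_finsetSum _ fun i _ => hi i]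
    simp only [form, integral_mul_const]
  refine .of_dotProduct_mulVec_nonneg ?_ fun v => ?_
  · exact ((IsSelfAdjoint.all lam).smul (cfc_predicate _ X)).add
      ((IsSelfAdjoint.all (1 - lam)).smul (cfc_predicate _ Y)) |>.sub (cfc_predicate _ Z)
  obtain ⟨hXi, hXe⟩ := hform hX hXI v
  obtain ⟨hYi, hYe⟩ := hform hY hYI v
  obtain ⟨hZi, hZe⟩ := hform hZ hZI v
  have hgap_integral : gap (fun x => ∫ s, k s x ∂μ) v = ∫ s, gap (k s) v ∂μ := by
    simp only [gap]
    rw [hXe, hYe, hZe, ← integral_const_mul, ← integral_const_mul,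
      ← integral_add (hXi.const_mul _) (hYi.const_mul _)]
    exact (integral_sub ((hXi.const_mul _).add (hYi.const_mul _)) hZi).symm
  have hgap_nonneg : ∀ᵐ s ∂μ, 0 ≤ gap (k s) v := hk.mono fun s hs => by
    have := (hs m X Y hX hY hXI hYI lam hlam).dotProduct_mulVec_nonneg v
    rwa [hgap, Complex.zero_le_real] at this
  rw [hgap, hgap_integral]
  exact Complex.zero_le_real.2 (integral_nonneg_of_ae hgap_nonneg)

end OperatorConvexOn

lemma operatorConvexOn_affine (c d : ℝ) : OperatorConvexOn univ (fun x => c * x + d) := by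
  intro m X Y hX hY _ _ lam _
  rw [hX.cfc_affine, hY.cfc_affine, (hX.convexComb hY lam).cfc_affine]
  convert PosSemidef.zero using 1
  module

lemma operatorConvexOn_inv : OperatorConvexOn (Ioi 0) (fun x => x⁻¹) := by
  intro m X Y hX hY hXI hYI lam hlam
  have hpos : ∀ {W : Matrix (Fin m) (Fin m) ℂ} (hW : W.IsHermitian), spectrum ℝ W ⊆ Ioi 0 →
      W.PosDef := fun hW hWI =>
    hW.posDef_iff_eigenvalues_pos.2 fun i => hWI (hW.eigenvalues_mem_spectrum_real i)
  have hinv : ∀ {W : Matrix (Fin m) (Fin m) ℂ}, W.PosDef → cfc (fun x : ℝ => x⁻¹) W = W⁻¹ :=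
    fun hW => by rw [cfc_ringInverse_id _ hW.isUnit hW.isHermitian.isSelfAdjoint,
      nonsing_inv_eq_ringInverse]
  have hXpos := hpos hX hXI
  have hYpos := hpos hY hYI
  rw [hinv hXpos, hinv hYpos, hinv (hXpos.convexComb hYpos hlam)]
  exact hXpos.inv_convexComb_le hYpos hlam

lemma operatorConvexOn_sq : OperatorConvexOn univ (fun x => x ^ 2) := by
  intro m X Y hX hY _ _ lam hlam
  have hgap : lam • X ^ 2 + (1 - lam) • Y ^ 2 - (lam • X + (1 - lam) • Y) ^ 2 =
      (lam * (1 - lam)) • ((X - Y)ᴴ * (X - Y)) := by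
    rw [(hX.sub hY).eq]
    simp only [sq, add_mul, mul_add, sub_mul, mul_sub, smul_mul_assoc, mul_smul_comm]
    module
  rw [cfc_pow_id X 2 hX.isSelfAdjoint, cfc_pow_id Y 2 hY.isSelfAdjoint,
    cfc_pow_id _ 2 (hX.convexComb hY lam).isSelfAdjoint, hgap]
  exact (posSemidef_conjTranspose_mul_self _).smul (mul_nonneg hlam.1 (sub_nonneg.2 hlam.2))

lemma operatorConvexOn_sq_div_one_sub_mul (s : ℝ) :
    OperatorConvexOn {x | 0 < 1 - s * x} (fun x => x ^ 2 / (1 - s * x)) := by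
  have hconv : Convex ℝ {x : ℝ | 0 < 1 - s * x} := by
    simp only [sub_pos]
    exact convex_halfSpace_lt (LinearMap.mulLeft ℝ s).isLinear 1
  rcases eq_or_ne s 0 with rfl | hs
  · exact (operatorConvexOn_sq.mono (subset_univ _)).congr hconv fun x _ => by simp
  · have hmaps : MapsTo (fun x => -s * x + 1) {x | 0 < 1 - s * x} (Ioi 0) :=
      fun x (hx : 0 < 1 - s * x) => show 0 < -s * x + 1 by linarith
    have hinv := (operatorConvexOn_inv.comp_affine hmaps).const_mul (inv_nonneg.2 (sq_nonneg s))
    refine (hinv.add ((operatorConvexOn_affine (-s⁻¹) (-s⁻¹ ^ 2)).mono (subset_univ _))).congr hconv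
      fun x (hx : 0 < 1 - s * x) => ?_
    have := hx.ne'
    rw [show -s * x + 1 = 1 - s * x by ring]
    field_simp
    ring

lemma operatorConcaveOn_transpose_loewnerKernel {γ s : ℝ} (hγ : 0 < γ) (hs : s ≤ γ) :
    OperatorConcaveOn (Ioo 0 (1 / γ)) (fun x => x * (1 / (s - 1 / x) - s / (s ^ 2 + 1))) := by
  have hpos : ∀ x ∈ Ioo 0 (1 / γ), 0 < 1 - s * x := fun x hx => by
    have := (lt_div_iff₀ hγ).1 hx.2
    nlinarith [hx.1]
  refine (((operatorConvexOn_sq_div_one_sub_mul s).mono hpos).add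
    ((operatorConvexOn_affine (s / (s ^ 2 + 1)) 0).mono (subset_univ _))).congr (convex_Ioo _ _)
    fun x hx => ?_
  have := (hpos x hx).ne'
  have := hx.1.ne'
  dsimp only
  rw [show s - 1 / x = -((1 - s * x) / x) by field_simp; ring, one_div_neg_eq_neg_one_div,
    one_div_div]
  field_simp
  ring

theorem transpose_operator_concave_general (γ : ℝ) (hγ : 0 < γ) (f : ℝ → ℝ) (a b : ℝ)
    (μ : Measure ℝ) (hsupp : μ (Set.Ioi γ) = 0)
    (hint : ∀ x ∈ Set.Ioi γ,
      Integrable (fun s => 1 / (s - x) - s / (s ^ 2 + 1)) μ)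
    (hrep : ∀ x ∈ Set.Ioi γ,
      f x = a + b * x + ∫ s, (1 / (s - x) - s / (s ^ 2 + 1)) ∂μ) :
    OperatorConcaveOn (Set.Ioo 0 (1 / γ)) (fun x => x * f (1 / x)) := by
  have hinv : ∀ x ∈ Ioo 0 (1 / γ), 1 / x ∈ Ioi γ := fun x hx => (lt_one_div hγ hx.1).2 hx.2
  have hkernel : ∀ᵐ s ∂μ, OperatorConcaveOn (Ioo 0 (1 / γ))
      (fun x => x * (1 / (s - 1 / x) - s / (s ^ 2 + 1))) := by
    filter_upwards [measure_eq_zero_iff_ae_notMem.1 hsupp] with s hs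
    exact operatorConcaveOn_transpose_loewnerKernel hγ (not_lt.1 hs)
  have hintegral := OperatorConvexOn.integral (convex_Ioo _ _) hkernel
    fun x hx => ((hint _ (hinv x hx)).const_mul x).neg
  refine (hintegral.add ((operatorConvexOn_affine (-a) (-b)).mono (subset_univ _))).congr
    (convex_Ioo _ _) fun x hx => ?_
  have := hx.1.ne'
  simp only [hrep _ (hinv x hx), integral_neg, integral_const_mul]
  field_simp
  ring

/-- If `f` is operator monotone on `(γ,∞)` (via its Loewner integral representation
`f(x) = a + bx + ∫ (1/(s−x) − s/(s²+1)) dμ(s)` with `b ≥ 0` and `μ` a positive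
Borel measure on `(−∞,γ]`), then the transpose `f̂(x) = x·f(1/x)` is operator
concave on `(0, 1/γ)`. -/
theorem transpose_operator_concave (γ : ℝ) (hγ : 0 < γ) (f : ℝ → ℝ) (a b : ℝ)
    (hb : 0 ≤ b) (μ : Measure ℝ) (hsupp : μ (Set.Ioi γ) = 0)
    (hint : ∀ x ∈ Set.Ioi γ,
      Integrable (fun s => 1 / (s - x) - s / (s ^ 2 + 1)) μ)
    (hrep : ∀ x ∈ Set.Ioi γ,
      f x = a + b * x + ∫ s, (1 / (s - x) - s / (s ^ 2 + 1)) ∂μ) :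
    OperatorConcaveOn (Set.Ioo 0 (1 / γ)) (fun x => x * f (1 / x)) :=
  transpose_operator_concave_general γ hγ f a b μ hsupp hint hrep
end

section
/- Let α ∈ [2,∞) and f(x,y) = −x^α y^{1−α} on (0,∞)². For all x, y > 0 and h, v ∈ ℝ with x ± h ≥ 0 and y ± v ≥ 0, the directional derivatives satisfy D³f(x,y)[(h,v)]³ ≤ (2α−1)·(−D²f(x,y)[(h,v)]²) · 3/3, i.e., D³f(x,y)[(h,v),(h,v),(h,v)] ≤ −3·((2α−1)/3)·D²f(x,y)[(h,v),(h,v)]. -/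
/-! Along the line `t ↦ (x + t h, y + t v)`, Leibniz's rule and the iterated derivatives of
`t ↦ (x + t h) ^ p` give, with `x̂ = h / x` and `ŷ = v / y`,
`D²f = -α(α-1) x^α y^(1-α) (x̂ - ŷ)²` and `D³f = D²f · ((α-2) x̂ - (α+1) ŷ)`.
As `D²f ≤ 0`, the claim reduces to `(α+1) ŷ - (α-2) x̂ ≤ 2α - 1`, which follows from
`x̂ ≥ -1` and `ŷ ≤ 1`. -/

open Finset Polynomial

theorem iteratedDeriv_comp_const_add_mul_const {𝕜 : Type*} [NontriviallyNormedField 𝕜]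
    (f : 𝕜 → 𝕜) (a c : 𝕜) (n : ℕ) :
    iteratedDeriv n (fun t => f (a + t * c)) = fun t => c ^ n * iteratedDeriv n f (a + t * c) := by
  induction n with
  | zero => simp
  | succ n ih =>
    funext t
    have hcomp := deriv_comp_mul_left c (fun s => iteratedDeriv n f (a + s)) t
    simp only [deriv_comp_const_add, smul_eq_mul] at hcomp
    rw [iteratedDeriv_succ, ih, iteratedDeriv_succ, deriv_const_mul_field]
    simp only [mul_comm _ c, hcomp, pow_succ]
    ring

theorem iteratedDeriv_affine_rpow_zero {x : ℝ} (hx : x ≠ 0) (h p : ℝ) (n : ℕ) :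
    iteratedDeriv n (fun t : ℝ => (x + t * h) ^ p) 0 =
      (descPochhammer ℝ n).eval p * x ^ p * (h / x) ^ n := by
  rw [iteratedDeriv_comp_const_add_mul_const (· ^ p), iteratedDeriv_eq_iterate]
  dsimp only
  rw [Real.iter_deriv_rpow_const, zero_mul, add_zero, Real.rpow_sub_natCast hx, div_pow]
  field_simp

theorem iteratedDeriv_affine_rpow_mul_affine_rpow_zero {x y : ℝ} (hx : x ≠ 0) (hy : y ≠ 0)
    (h v p q : ℝ) (n : ℕ) :
    iteratedDeriv n (fun t : ℝ => (x + t * h) ^ p * (y + t * v) ^ q) 0 =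
      x ^ p * y ^ q * ∑ i ∈ range (n + 1), n.choose i * (descPochhammer ℝ i).eval p *
        (descPochhammer ℝ (n - i)).eval q * (h / x) ^ i * (v / y) ^ (n - i) := by
  have hX : ContDiffAt ℝ n (fun t : ℝ => (x + t * h) ^ p) 0 :=
    ContDiffAt.rpow_const_of_ne (by fun_prop) (by simpa using hx)
  have hY : ContDiffAt ℝ n (fun t : ℝ => (y + t * v) ^ q) 0 :=
    ContDiffAt.rpow_const_of_ne (by fun_prop) (by simpa using hy)
  rw [iteratedDeriv_fun_mul hX hY, mul_sum]
  refine sum_congr rfl fun i _ => ?_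
  rw [iteratedDeriv_affine_rpow_zero hx, iteratedDeriv_affine_rpow_zero hy]
  ring

theorem iteratedDeriv_two_neg_rpow_mul_rpow_one_sub {x y : ℝ} (hx : x ≠ 0) (hy : y ≠ 0)
    (α h v : ℝ) :
    iteratedDeriv 2 (fun t : ℝ => -((x + t * h) ^ α * (y + t * v) ^ (1 - α))) 0 =
      -(α * (α - 1) * x ^ α * y ^ (1 - α) * (h / x - v / y) ^ 2) := by
  rw [iteratedDeriv_fun_neg, iteratedDeriv_affine_rpow_mul_affine_rpow_zero hx hy]
  simp only [sum_range_succ, sum_range_zero, descPochhammer_succ_right, descPochhammer_zero,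
    eval_mul, eval_sub, eval_X, eval_natCast, eval_one, Nat.choose_zero_right,
    Nat.choose_one_right, Nat.choose_self, Nat.reduceSub, Nat.reduceAdd]
  push_cast
  ring

theorem iteratedDeriv_three_neg_rpow_mul_rpow_one_sub {x y : ℝ} (hx : x ≠ 0) (hy : y ≠ 0)
    (α h v : ℝ) :
    iteratedDeriv 3 (fun t : ℝ => -((x + t * h) ^ α * (y + t * v) ^ (1 - α))) 0 =
      -(α * (α - 1) * x ^ α * y ^ (1 - α) * (h / x - v / y) ^ 2 *
        ((α - 2) * (h / x) - (α + 1) * (v / y))) := by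
  rw [iteratedDeriv_fun_neg, iteratedDeriv_affine_rpow_mul_affine_rpow_zero hx hy]
  simp only [sum_range_succ, sum_range_zero, descPochhammer_succ_right, descPochhammer_zero,
    eval_mul, eval_sub, eval_X, eval_natCast, eval_one, Nat.choose_zero_right,
    Nat.choose_one_right, Nat.choose_self, Nat.choose_succ_self_right, Nat.reduceSub, Nat.reduceAdd]
  push_cast
  ring

theorem scalar_compatibility_general (α : ℝ) (hα : 2 ≤ α) (x y h v : ℝ)
    (hx : 0 < x) (hy : 0 < y)
    (hxp : 0 ≤ x + h) (hym : 0 ≤ y - v) :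
    iteratedDeriv 3 (fun t : ℝ => -((x + t * h) ^ α * (y + t * v) ^ (1 - α))) 0
      ≤ -3 * ((2 * α - 1) / 3) *
        iteratedDeriv 2 (fun t : ℝ => -((x + t * h) ^ α * (y + t * v) ^ (1 - α))) 0 := by
  rw [iteratedDeriv_three_neg_rpow_mul_rpow_one_sub hx.ne' hy.ne',
    iteratedDeriv_two_neg_rpow_mul_rpow_one_sub hx.ne' hy.ne']
  have hxh : -1 ≤ h / x := by rw [le_div_iff₀ hx]; linarith
  have hyv : v / y ≤ 1 := by rw [div_le_one hy]; linarith
  have hK : 0 ≤ α * (α - 1) * x ^ α * y ^ (1 - α) * (h / x - v / y) ^ 2 := by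
    have hαα : 0 ≤ α * (α - 1) := mul_nonneg (by linarith) (by linarith)
    positivity
  have hcubic : 0 ≤ 2 * α - 1 + ((α - 2) * (h / x) - (α + 1) * (v / y)) := by
    linarith [mul_nonneg (by linarith : (0 : ℝ) ≤ α - 2) (by linarith : 0 ≤ h / x + 1),
      mul_nonneg (by linarith : (0 : ℝ) ≤ α + 1) (by linarith : 0 ≤ 1 - v / y)]
  linarith [mul_nonneg hK hcubic]

/-- For `α ≥ 2` and `f(x,y) = −x^α y^{1−α}`, for all `x, y > 0` and directions `(h,v)`
with `x ± h ≥ 0` and `y ± v ≥ 0`, the directional derivatives satisfy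
`D³f[(h,v)]³ ≤ −3·((2α−1)/3)·D²f[(h,v)]²`. -/
theorem scalar_compatibility (α : ℝ) (hα : 2 ≤ α) (x y h v : ℝ)
    (hx : 0 < x) (hy : 0 < y)
    (hxp : 0 ≤ x + h) (hxm : 0 ≤ x - h) (hyp : 0 ≤ y + v) (hym : 0 ≤ y - v) :
    iteratedDeriv 3 (fun t : ℝ => -((x + t * h) ^ α * (y + t * v) ^ (1 - α))) 0
      ≤ -3 * ((2 * α - 1) / 3) *
        iteratedDeriv 2 (fun t : ℝ => -((x + t * h) ^ α * (y + t * v) ^ (1 - α))) 0 :=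
  scalar_compatibility_general α hα x y h v hx hy hxp hym
end
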